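/- arXiv:math/0304093 — 3 statements merged into one kernel-verified Lean document; each statement's English description precedes it below -/
import Mathlib

section
/- Dirac's theorem: if G is a finite simple graph with p ≥ 3 vertices and every vertex has degree at least p/2, then G is Hamiltonian (contains a cycle passing through every vertex). -/
/-!
Dirac's bound gives Ore's condition `deg u + deg v ≥ n` for non-adjacent `u ≠ v`, and
Hamiltonicity follows from the latter. Order all `n` vertices cyclically and count the consecutive
pairs that are adjacent; take an order maximising this count. If some consecutive `u, v` are
non-adjacent, rotate the order to read `v, w₁, …, wₖ, u`. Since `deg u + deg v ≥ n > k + 1`, by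
pigeonhole some consecutive `a, b` of `v, w₁, …, wₖ` satisfy `u ~ a` and `v ~ b`, and reversing
the segment `b … u` trades the pairs `(a, b)`, `(u, v)` for the adjacent pairs `(a, u)`, `(b, v)`,
contradicting maximality. Hence all `n` consecutive pairs are edges: a Hamiltonian cycle.
-/

open Finset

namespace List

variable {α : Type*}

lemma exists_eq_append_cons_cons_of_length_lt (p q : α → Prop) [DecidablePred p]
    [DecidablePred q] :
    ∀ l : List α, l.length < l.countP p + l.tail.countP q →
      ∃ s a b r, l = s ++ a :: b :: r ∧ p a ∧ q b
  | [], h => by simp at h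
  | [x], h => by
    simp only [length_cons, length_nil, zero_add, countP_singleton, tail_cons, countP_nil,
      add_zero] at h
    split at h <;> omega
  | x :: y :: l, h => by
    by_cases hxy : p x ∧ q y
    · exact ⟨[], x, y, l, rfl, hxy⟩
    · obtain ⟨s, a, b, r, hl, hpa, hqb⟩ :=
        exists_eq_append_cons_cons_of_length_lt p q (y :: l) (by
          simp only [length_cons, countP_cons, tail_cons] at h ⊢
          grind)
      exact ⟨x :: s, a, b, r, by rw [hl, cons_append], hpa, hqb⟩

end List

namespace SimpleGraph

variable {V : Type*} (G : SimpleGraph V)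

lemma exists_isHamiltonianCycle_of_isChain [Fintype V] [DecidableEq V] {v : V} {t : List V}
    (hl : (v :: t).Perm univ.toList) (h3 : 3 ≤ Fintype.card V)
    (hchain : (v :: t ++ [v]).IsChain G.Adj) : ∃ p : G.Walk v v, p.IsHamiltonianCycle := by
  obtain ⟨p, hsupp⟩ : ∃ p : G.Walk v v, p.support = v :: t ++ [v] :=
    ⟨(Walk.ofSupport _ (by simp) hchain).copy (by simp) (by simp),
      (Walk.support_copy _ _ _).trans (Walk.support_ofSupport _ _)⟩
  have hlen : p.length = Fintype.card V := by
    have := p.length_support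
    rw [hsupp, List.length_append, hl.length_eq] at this
    simpa using this.symm
  have hnodup : (t ++ [v]).Nodup :=
    ((List.perm_append_singleton v t).trans hl).nodup_iff.2 univ.nodup_toList
  refine ⟨p, Walk.isHamiltonianCycle_iff_isCycle_and_length_eq.2 ⟨?_, hlen⟩⟩
  rw [Walk.isCycle_iff_isPath_tail_and_le_length, Walk.isPath_def,
    Walk.support_tail_of_not_nil _ (Walk.not_nil_iff_lt_length.2 (by omega)), hsupp, hlen]
  exact ⟨hnodup, h3⟩

variable [DecidableRel G.Adj]

def adjPairCount : List V → ℕ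
  | a :: b :: l => (if G.Adj a b then 1 else 0) + adjPairCount (b :: l)
  | _ => 0

@[simp] lemma adjPairCount_nil : G.adjPairCount [] = 0 := rfl
@[simp] lemma adjPairCount_singleton (a : V) : G.adjPairCount [a] = 0 := rfl
@[simp] lemma adjPairCount_cons_cons (a b : V) (l : List V) :
    G.adjPairCount (a :: b :: l) = (if G.Adj a b then 1 else 0) + G.adjPairCount (b :: l) := rfl

lemma adjPairCount_append_cons :
    ∀ (s : List V) (a : V) (r : List V),
      G.adjPairCount (s ++ a :: r) = G.adjPairCount (s ++ [a]) + G.adjPairCount (a :: r)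
  | [], _, _ => by simp
  | [_], _, _ => rfl
  | x :: y :: s, a, r => by
    have ih := adjPairCount_append_cons (y :: s) a r
    simp only [List.cons_append, adjPairCount_cons_cons] at ih ⊢
    omega

lemma adjPairCount_reverse : ∀ l : List V, G.adjPairCount l.reverse = G.adjPairCount l
  | [] | [_] => rfl
  | x :: y :: l => by
    rw [List.reverse_cons, List.reverse_cons, List.append_assoc, List.singleton_append,
      adjPairCount_append_cons, ← List.reverse_cons, adjPairCount_reverse (y :: l),
      adjPairCount_cons_cons, adjPairCount_cons_cons]
    simp only [G.adj_comm y x, adjPairCount_singleton]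
    omega

lemma adjPairCount_le_length_sub_one : ∀ l : List V, G.adjPairCount l ≤ l.length - 1
  | [] | [_] => le_rfl
  | a :: b :: l => by
    have := adjPairCount_le_length_sub_one (b :: l)
    simp only [adjPairCount_cons_cons, List.length_cons] at this ⊢
    split <;> omega

lemma isChain_adj_iff_adjPairCount_eq :
    ∀ l : List V, l.IsChain G.Adj ↔ G.adjPairCount l = l.length - 1
  | [] | [_] => by simp
  | a :: b :: l => by
    have := G.adjPairCount_le_length_sub_one (b :: l)
    simp only [List.isChain_cons_cons, isChain_adj_iff_adjPairCount_eq (b :: l),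
      adjPairCount_cons_cons, List.length_cons] at this ⊢
    split <;> simp_all <;> omega

def cyclicAdjPairCount (l : List V) : ℕ := G.adjPairCount (l ++ l.take 1)

lemma cyclicAdjPairCount_cons (v : V) (t : List V) :
    G.cyclicAdjPairCount (v :: t) = G.adjPairCount (v :: t ++ [v]) := rfl

lemma cyclicAdjPairCount_cons_append_cons (x y : V) (p q : List V) :
    G.cyclicAdjPairCount (x :: p ++ y :: q) =
      G.adjPairCount (x :: p ++ [y]) + G.adjPairCount (y :: q ++ [x]) := by
  simpa [cyclicAdjPairCount] using G.adjPairCount_append_cons (x :: p) y (q ++ [x])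

lemma cyclicAdjPairCount_append_comm (s r : List V) :
    G.cyclicAdjPairCount (s ++ r) = G.cyclicAdjPairCount (r ++ s) := by
  match s, r with
  | [], _ | _, [] => simp
  | x :: s, y :: r =>
    rw [cyclicAdjPairCount_cons_append_cons, cyclicAdjPairCount_cons_append_cons, add_comm]

lemma cyclicAdjPairCount_le_length (l : List V) : G.cyclicAdjPairCount l ≤ l.length := by
  have := G.adjPairCount_le_length_sub_one (l ++ l.take 1)
  simp only [List.length_append, List.length_take] at this
  exact this.trans (by omega)

lemma exists_perm_not_adj_of_cyclicAdjPairCount_lt {l : List V} (hl : 2 ≤ l.length)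
    (h : G.cyclicAdjPairCount l < l.length) :
    ∃ v w u, (v :: w ++ [u]).Perm l ∧
      G.cyclicAdjPairCount (v :: w ++ [u]) = G.cyclicAdjPairCount l ∧ ¬ G.Adj u v := by
  obtain ⟨x, m, y, rfl⟩ : ∃ x m y, l = x :: m ++ [y] := by
    obtain ⟨x, m', rfl⟩ := List.exists_cons_of_length_pos (by omega : 0 < l.length)
    obtain rfl | ⟨m, y, rfl⟩ := m'.eq_nil_or_concat'
    · simp at hl
    · exact ⟨x, m, y, rfl⟩
  by_cases hyx : G.Adj y x
  · have hcount : G.cyclicAdjPairCount (x :: m ++ [y]) = G.adjPairCount (x :: m ++ [y]) + 1 := by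
      simpa [hyx] using G.cyclicAdjPairCount_cons_append_cons x y m []
    have : ¬ (x :: m ++ [y]).IsChain G.Adj := by
      rw [isChain_adj_iff_adjPairCount_eq]
      simp only [List.cons_append, List.length_cons, List.length_append] at h hcount ⊢
      omega
    simp only [List.isChain_iff_forall_rel_of_append_cons_cons, not_forall] at this
    obtain ⟨a, b, s, r, hl, hab⟩ := this
    have hrot : b :: (r ++ s) ++ [a] = (b :: r) ++ (s ++ [a]) := by simp
    refine ⟨b, r ++ s, a, ?_, ?_, hab⟩
    · rw [hl, hrot]
      simpa using List.perm_append_comm (l₁ := b :: r) (l₂ := s ++ [a])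
    · rw [hl, hrot, cyclicAdjPairCount_append_comm]
      simp
  · exact ⟨x, m, y, .refl _, rfl, hyx⟩

lemma cyclicAdjPairCount_append (x y z w : V) (p q : List V) :
    G.cyclicAdjPairCount ((x :: p ++ [y]) ++ (z :: q ++ [w])) =
      G.adjPairCount (x :: p ++ [y]) + G.adjPairCount (z :: q ++ [w]) +
        ((if G.Adj y z then 1 else 0) + if G.Adj w x then 1 else 0) := by
  rw [show (x :: p ++ [y]) ++ (z :: q ++ [w]) = x :: (p ++ [y]) ++ z :: (q ++ [w]) by simp,
    cyclicAdjPairCount_cons_append_cons,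
    show x :: (p ++ [y]) ++ [z] = x :: p ++ y :: [z] by simp,
    adjPairCount_append_cons _ (x :: p) y [z],
    show z :: (q ++ [w]) ++ [x] = z :: q ++ w :: [x] by simp,
    adjPairCount_append_cons _ (z :: q) w [x]]
  simp only [adjPairCount_cons_cons, adjPairCount_singleton]
  omega

lemma cyclicAdjPairCount_lt_reverse_segment {u v a b : V} (huv : ¬ G.Adj u v) (hua : G.Adj u a)
    (hvb : G.Adj v b) (s r : List V) :
    G.cyclicAdjPairCount (v :: s ++ a :: b :: r ++ [u]) <
      G.cyclicAdjPairCount (v :: s ++ a :: (b :: r ++ [u]).reverse) := by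
  rw [show v :: s ++ a :: b :: r ++ [u] = (v :: s ++ [a]) ++ (b :: r ++ [u]) by simp,
    show v :: s ++ a :: (b :: r ++ [u]).reverse = (v :: s ++ [a]) ++ (u :: r.reverse ++ [b]) by
      simp,
    cyclicAdjPairCount_append, cyclicAdjPairCount_append,
    show u :: r.reverse ++ [b] = (b :: r ++ [u]).reverse by simp, adjPairCount_reverse]
  simp only [huv, hua.symm, hvb.symm, if_true, if_false]
  split <;> omega

variable [Fintype V]

lemma degree_eq_countP_of_perm {l : List V} (hl : l.Perm univ.toList) (x : V) :
    G.degree x = l.countP (G.Adj x ·) := by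
  rw [hl.countP_eq, ← Multiset.coe_countP, coe_toList, Multiset.countP_eq_card_filter,
    ← card_neighborFinset_eq_degree, neighborFinset_eq_filter]
  rfl

lemma exists_crossing_pair
    (hore : ∀ u v, u ≠ v → ¬ G.Adj u v → Fintype.card V ≤ G.degree u + G.degree v)
    {v u : V} {w : List V} (hperm : (v :: w ++ [u]).Perm univ.toList) (huv : ¬ G.Adj u v) :
    ∃ s a b r, w = s ++ a :: b :: r ∧ G.Adj u a ∧ G.Adj v b := by
  have hne : u ≠ v := by
    rintro rfl
    simpa using hperm.nodup_iff.2 univ.nodup_toList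
  have hdu := G.degree_eq_countP_of_perm hperm u
  have hdv := G.degree_eq_countP_of_perm hperm v
  simp only [List.cons_append, List.countP_cons, List.countP_append, List.countP_nil, G.irrefl,
    huv, G.adj_comm v u, decide_false, Bool.false_eq_true, if_false, add_zero] at hdu hdv
  have hwlen : w.length + 2 = Fintype.card V := by simpa using hperm.length_eq
  obtain ⟨s, a, b, r, hw, hua, hvb⟩ := List.exists_eq_append_cons_cons_of_length_lt
    (G.Adj u ·) (G.Adj v ·) (v :: w) (by
      have := hore u v hne huv
      simp only [List.length_cons, List.tail_cons, List.countP_cons, huv, decide_false]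
      omega)
  rcases s with _ | ⟨x, s⟩
  · simp only [List.nil_append, List.cons.injEq] at hw
    exact absurd (hw.1 ▸ hua) huv
  simp only [List.cons_append, List.cons.injEq] at hw
  exact ⟨s, a, b, r, hw.2, hua, hvb⟩

lemma exists_perm_cyclicAdjPairCount_gt (h2 : 2 ≤ Fintype.card V)
    (hore : ∀ u v, u ≠ v → ¬ G.Adj u v → Fintype.card V ≤ G.degree u + G.degree v)
    {l : List V} (hl : l.Perm univ.toList) (hlt : G.cyclicAdjPairCount l < Fintype.card V) :
    ∃ l' : List V, l'.Perm univ.toList ∧ G.cyclicAdjPairCount l < G.cyclicAdjPairCount l' := by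
  have hlen : l.length = Fintype.card V := by simp [hl.length_eq]
  obtain ⟨v, w, u, hperm, hcount, huv⟩ :=
    G.exists_perm_not_adj_of_cyclicAdjPairCount_lt (hlen ▸ h2) (hlen ▸ hlt)
  replace hperm := hperm.trans hl
  obtain ⟨s, a, b, r, rfl, hua, hvb⟩ := G.exists_crossing_pair hore hperm huv
  refine ⟨v :: s ++ a :: (b :: r ++ [u]).reverse, List.Perm.trans ?_ hperm, ?_⟩
  · simpa using (((List.reverse_perm (b :: r ++ [u])).cons a).append_left s).cons v
  · rw [← hcount]
    convert G.cyclicAdjPairCount_lt_reverse_segment huv hua hvb s r using 2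
    simp

theorem isHamiltonian_of_card_le_degree_add_degree [DecidableEq V] (h3 : 3 ≤ Fintype.card V)
    (hore : ∀ u v, u ≠ v → ¬ G.Adj u v → Fintype.card V ≤ G.degree u + G.degree v) :
    G.IsHamiltonian := by
  intro _
  obtain ⟨l, hl, hmax⟩ := univ.toList.permutations.toFinset.exists_max_image
    G.cyclicAdjPairCount ⟨univ.toList, by simp⟩
  rw [List.mem_toFinset, List.mem_permutations] at hl
  have hlen : l.length = Fintype.card V := by simp [hl.length_eq]
  have hfull : G.cyclicAdjPairCount l = l.length := by
    refine (G.cyclicAdjPairCount_le_length l).antisymm (not_lt.1 fun hlt => ?_)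
    obtain ⟨l', hl', hgt⟩ := G.exists_perm_cyclicAdjPairCount_gt (by omega) hore hl (hlen ▸ hlt)
    exact (hmax l' (by simpa using hl')).not_gt hgt
  obtain ⟨v, t, rfl⟩ := List.exists_cons_of_length_pos (by omega : 0 < l.length)
  have hchain : (v :: t ++ [v]).IsChain G.Adj := by
    rw [isChain_adj_iff_adjPairCount_eq, ← cyclicAdjPairCount_cons, hfull]
    simp
  obtain ⟨p, hp⟩ := G.exists_isHamiltonianCycle_of_isChain hl h3 hchain
  exact ⟨v, p, hp⟩

end SimpleGraph

/-- Dirac's theorem: a finite simple graph on `p ≥ 3` vertices in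
which every vertex has degree at least `p/2` is Hamiltonian. -/
theorem dirac_hamiltonian {V : Type*} [Fintype V] [DecidableEq V]
    (G : SimpleGraph V) [DecidableRel G.Adj] (hp : 3 ≤ Fintype.card V)
    (hdeg : ∀ x : V, Fintype.card V ≤ 2 * G.degree x) :
    G.IsHamiltonian :=
  G.isHamiltonian_of_card_le_degree_add_degree hp fun u v _ _ => by
    have := hdeg u; have := hdeg v; omega
end

section
/- Pósa's theorem: let G be a finite simple graph on p ≥ 3 vertices such that for every natural number j with 1 ≤ j < p/2, the number of vertices of degree at most j is less than j. Then G is Hamiltonian. -/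
/-!
Pass to an edge-maximal non-Hamiltonian supergraph `H` of `G` and pick non-adjacent `u`, `v`
maximising `deg u + deg v`, with `deg u ≤ deg v`. Adding the edge `uv` creates a Hamiltonian
cycle, so `H` has a Hamiltonian path from `u` to `v`. If the predecessor on this path of a
neighbour of `u` were adjacent to `v`, rotating the path would close a Hamiltonian cycle in `H`;
so these `deg u` predecessors are non-neighbours of `v`, and `deg u + deg v < p` (Ore).
By maximality of the pair, each of the `p - 1 - deg v ≥ deg u` non-neighbours of `v` has degree
at most `k = deg u` (in `H`, hence in `G`), while `1 ≤ k` and `2k < p`: this contradicts the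
hypothesis for `j = k`.
-/

open Finset

namespace SimpleGraph

variable {V : Type*} {G : SimpleGraph V} {u v : V}

lemma Walk.edges_subset_edgeSet_of_sup_edge {a b : V} (p : (G ⊔ edge u v).Walk a b)
    (h : s(u, v) ∉ p.edges) : ∀ e ∈ p.edges, e ∈ G.edgeSet := fun e he => by
  have := p.edges_subset_edgeSet he
  rw [edgeSet_sup, Set.mem_union] at this
  exact this.resolve_right fun he' => h (Set.mem_singleton_iff.1 (edgeSet_edge_subset he') ▸ he)

variable [DecidableEq V]

namespace Walk

lemma IsHamiltonian.of_support_perm {u' v' : V} {p : G.Walk u v} {q : G.Walk u' v'}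
    (hp : p.IsHamiltonian) (h : q.support.Perm p.support) : q.IsHamiltonian :=
  fun a => (h.count_eq a).trans (hp a)

variable [Fintype V]

lemma IsHamiltonian.isHamiltonian_of_adj {p : G.Walk u v} (hp : p.IsHamiltonian)
    (h : G.Adj v u) (hcard : 3 ≤ Fintype.card V) : G.IsHamiltonian := by
  refine fun _ => ⟨v, cons h p, ?_⟩
  have hlen := hp.length_eq
  rw [isHamiltonianCycle_iff_isCycle_and_length_eq, cons_isCycle_iff, length_cons]
  refine ⟨⟨hp.isPath, fun he => ?_⟩, by omega⟩
  have := hp.isPath.length_eq_one_of_mem_edges (Sym2.eq_swap ▸ he)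
  omega

lemma IsHamiltonian.isHamiltonian_of_adj_getVert {p : G.Walk u v} (hp : p.IsHamiltonian)
    {j : ℕ} (hj : 1 ≤ j) (hjp : j ≤ p.length)
    (hu : G.Adj u (p.getVert j)) (hv : G.Adj (p.getVert (j - 1)) v)
    (hcard : 3 ≤ Fintype.card V) : G.IsHamiltonian := by
  -- the path `p_j, …, v, p_{j-1}, …, u`, closed up by the edge `u p_j`
  let q := (p.drop j).append (cons hv.symm (p.take (j - 1)).reverse)
  have hq : q.support.Perm p.support := by
    have hj' : j - 1 + 1 = j := by omega
    simp only [q, support_append, support_cons, List.tail_cons, support_reverse, support_take,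
      drop_support_eq_support_drop_min, Nat.min_eq_left hjp, hj']
    exact (List.perm_append_comm.trans (List.Perm.append_right _ (List.reverse_perm _))).trans
      (by rw [List.take_append_drop])
  exact (hp.of_support_perm hq).isHamiltonian_of_adj hu hcard

lemma IsHamiltonian.degree_add_degree_lt_card [DecidableRel G.Adj]
    {p : G.Walk u v} (hp : p.IsHamiltonian) (hG : ¬G.IsHamiltonian)
    (hcard : 3 ≤ Fintype.card V) : G.degree u + G.degree v < Fintype.card V := by
  let idx : V → ℕ := fun w => p.support.idxOf w
  have hget (w : V) : p.getVert (idx w) = w := p.getVert_support_idxOf (hp.mem_support w)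
  have hidx {w : V} (hw : G.Adj u w) : 1 ≤ idx w ∧ idx w ≤ p.length := by
    have hlt : idx w < p.support.length := List.idxOf_lt_length_iff.2 (hp.mem_support w)
    rw [Walk.length_support] at hlt
    refine ⟨Nat.one_le_iff_ne_zero.2 fun h0 => hw.ne ?_, by omega⟩
    rw [← hget w, h0, getVert_zero]
  let pred : V → V := fun w => p.getVert (idx w - 1)
  have hinj : Set.InjOn pred (G.neighborFinset u) := by
    intro w₁ h₁ w₂ h₂ heq
    simp only [coe_neighborFinset, mem_neighborSet] at h₁ h₂
    obtain ⟨h₁, h₁'⟩ := hidx h₁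
    obtain ⟨h₂, h₂'⟩ := hidx h₂
    have := hp.isPath.getVert_injOn (by simp; omega) (by simp; omega) heq
    rw [← hget w₁, ← hget w₂]
    congr 1
    omega
  have hmaps : (G.neighborFinset u).image pred ⊆ (insert v (G.neighborFinset v))ᶜ := by
    simp only [subset_iff, mem_image, mem_compl, mem_insert, mem_neighborFinset]
    rintro _ ⟨w, hw, rfl⟩ (heq | hadj)
    · obtain ⟨h₁, h₂⟩ := hidx hw
      have := hp.isPath.getVert_injOn (by simp; omega) (by simp) (heq.trans p.getVert_length.symm)
      omega
    · obtain ⟨h₁, h₂⟩ := hidx hw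
      exact hG <| hp.isHamiltonian_of_adj_getVert h₁ h₂ (by rwa [hget]) hadj.symm hcard
  have := card_le_card hmaps
  rw [card_image_of_injOn hinj, card_compl, card_insert_of_notMem (by simp),
    card_neighborFinset_eq_degree, card_neighborFinset_eq_degree] at this
  have := G.degree_lt_card_verts v
  omega

end Walk

open Walk

variable [Fintype V]

lemma isHamiltonian_top (hcard : 3 ≤ Fintype.card V) : (⊤ : SimpleGraph V).IsHamiltonian := by
  let l := (univ : Finset V).toList
  have hl : l.Nodup := nodup_toList _
  have hlen : l.length = Fintype.card V := length_toList _
  have hne : l ≠ [] := List.ne_nil_of_length_pos (by omega)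
  let p := Walk.ofSupport l hne (hl.imp fun h => (top_adj _ _).2 h).isChain
  have hp : p.IsHamiltonian := fun a => by
    rw [support_ofSupport]
    exact List.count_eq_one_of_mem hl (mem_toList.2 (mem_univ a))
  refine hp.isHamiltonian_of_adj ((top_adj _ _).2 fun h => ?_) hcard
  rw [List.head_eq_getElem, List.getLast_eq_getElem, hl.getElem_inj_iff] at h
  omega

lemma exists_isHamiltonian_walk_of_isHamiltonian_sup_edge (hcard : 3 ≤ Fintype.card V)
    (huv : u ≠ v) (hG : ¬G.IsHamiltonian) (h : (G ⊔ edge u v).IsHamiltonian) :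
    ∃ p : G.Walk u v, p.IsHamiltonian := by
  suffices ∃ p : (G ⊔ edge u v).Walk u v, p.IsHamiltonian by
    obtain ⟨p, hp⟩ := this
    have hnot : s(u, v) ∉ p.edges := fun he => by
      have := hp.isPath.length_eq_one_of_mem_edges he
      have := hp.length_eq
      omega
    refine ⟨p.transfer G (p.edges_subset_edgeSet_of_sup_edge hnot), fun a => ?_⟩
    rw [support_transfer]
    exact hp a
  have : Nontrivial V := ⟨u, v, huv⟩
  obtain ⟨c, hc⟩ := h.exists_isHamiltonianCycle u
  have hmem : s(u, v) ∈ c.edges := by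
    by_contra hnot
    have hcG := c.edges_subset_edgeSet_of_sup_edge hnot
    refine hG fun _ => ⟨u, c.transfer G hcG, isHamiltonianCycle_iff_isCycle_and_length_eq.2
      ⟨hc.isCycle.transfer hcG, by rw [length_transfer, hc.length_eq]⟩⟩
  -- cut the cycle at `v`: the new edge is the whole of one of the two arcs
  have hv : v ∈ c.support := hc.mem_support v
  have hcyc : ((c.takeUntil v hv).append (c.dropUntil v hv)).IsCycle := by
    rw [take_spec]
    exact hc.isCycle
  have hpath₁ := hcyc.isPath_of_append_left (not_nil_of_ne huv.symm)
  have hpath₂ := hcyc.isPath_of_append_right (not_nil_of_ne huv)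
  have hlen : (c.takeUntil v hv).length + (c.dropUntil v hv).length = Fintype.card V := by
    rw [← length_append, take_spec, hc.length_eq]
  rw [← take_spec c hv, edges_append, List.mem_append] at hmem
  rcases hmem with h₁ | h₂
  · have := hpath₁.length_eq_one_of_mem_edges h₁
    exact ⟨(c.dropUntil v hv).reverse,
      isHamiltonian_iff_isPath_and_length_eq.2 ⟨hpath₂.reverse, by rw [length_reverse]; omega⟩⟩
  · have := hpath₂.length_eq_one_of_mem_edges (Sym2.eq_swap ▸ h₂)
    exact ⟨c.takeUntil v hv, isHamiltonian_iff_isPath_and_length_eq.2 ⟨hpath₁, by omega⟩⟩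

lemma exists_ge_maximal_not_isHamiltonian (hG : ¬G.IsHamiltonian) :
    ∃ H, G ≤ H ∧ ¬H.IsHamiltonian ∧ ∀ u v, Hᶜ.Adj u v → (H ⊔ edge u v).IsHamiltonian := by
  obtain ⟨H, ⟨hGH, hH⟩, hmax⟩ := Set.Finite.exists_maximalFor id
    {H | G ≤ H ∧ ¬H.IsHamiltonian} (Set.toFinite _) ⟨G, le_rfl, hG⟩
  refine ⟨H, hGH, hH, fun u v huv => by_contra fun h => (H.compl_adj u v).1 huv |>.2 ?_⟩
  exact hmax ⟨hGH.trans le_sup_left, h⟩ le_sup_left (by simp [edge_adj, huv.ne])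

lemma exists_compl_adj_forall_degree_add_le {H : SimpleGraph V} [DecidableRel H.Adj]
    (hH : H ≠ ⊤) : ∃ u v, Hᶜ.Adj u v ∧ H.degree u ≤ H.degree v ∧
      ∀ x y, Hᶜ.Adj x y → H.degree x + H.degree y ≤ H.degree u + H.degree v := by
  obtain ⟨x, y, hxy⟩ := ne_top_iff_exists_not_adj.1 hH
  rw [← compl_adj] at hxy
  obtain ⟨d, -, hd⟩ := exists_max_image (univ : Finset Hᶜ.Dart)
    (fun d => H.degree d.fst + H.degree d.snd) ⟨⟨(x, y), hxy⟩, mem_univ _⟩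
  have hd' (x y : V) (hxy : Hᶜ.Adj x y) := hd ⟨(x, y), hxy⟩ (mem_univ _)
  rcases le_total (H.degree d.fst) (H.degree d.snd) with h | h
  · exact ⟨d.fst, d.snd, d.adj, h, hd'⟩
  · exact ⟨d.snd, d.fst, d.adj.symm, h, fun x y hxy => (hd' x y hxy).trans_eq (add_comm _ _)⟩

end SimpleGraph

open SimpleGraph in
/-- Pósa's theorem: let `G` be a finite simple graph on `p ≥ 3`
vertices such that for every `j` with `1 ≤ j < p/2`, the number of vertices of
degree at most `j` is less than `j`. Then `G` is Hamiltonian. -/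
theorem posa_hamiltonian {V : Type*} [Fintype V] [DecidableEq V]
    (G : SimpleGraph V) [DecidableRel G.Adj] (hp : 3 ≤ Fintype.card V)
    (hdeg : ∀ j : ℕ, 1 ≤ j → 2 * j < Fintype.card V →
      (Finset.univ.filter fun x : V => G.degree x ≤ j).card < j) :
    G.IsHamiltonian := by
  classical
  by_contra hG
  have hdeg_pos (x : V) : 1 ≤ G.degree x := by
    by_contra! hx
    have : 0 < (univ.filter fun x : V => G.degree x ≤ 1).card :=
      card_pos.2 ⟨x, mem_filter.2 ⟨mem_univ x, by omega⟩⟩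
    have := hdeg 1 le_rfl (by omega)
    omega
  obtain ⟨H, hGH, hH, hmax⟩ := exists_ge_maximal_not_isHamiltonian hG
  obtain ⟨u, v, huv, hle, hbest⟩ :=
    exists_compl_adj_forall_degree_add_le (H := H) fun h => hH (h ▸ isHamiltonian_top hp)
  obtain ⟨p, hpath⟩ :=
    exists_isHamiltonian_walk_of_isHamiltonian_sup_edge hp huv.ne hH (hmax u v huv)
  have hore := hpath.degree_add_degree_lt_card hH hp
  have hsmall : Hᶜ.neighborFinset v ⊆ univ.filter fun x => G.degree x ≤ H.degree u := by
    intro x hx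
    have := hbest x v (Hᶜ.mem_neighborFinset v x |>.1 hx).symm
    have := degree_le_of_le (v := x) hGH
    simp only [mem_filter, mem_univ, true_and]
    omega
  have := card_le_card hsmall
  rw [card_neighborFinset_eq_degree, degree_compl] at this
  have := hdeg (H.degree u) ((hdeg_pos u).trans (degree_le_of_le hGH)) (by omega)
  omega
end

section
/- De Bruijn–Erdős compactness for colorings: if every finite subgraph of a simple graph G is properly colorable with k colors (k a fixed natural number), then G itself is properly colorable with k colors. -/
/-- de Bruijn–Erdős: if every finite induced subgraph of a simple
graph `G` admits a proper coloring with `k` colors, then so does `G`. -/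
theorem deBruijn_erdos {V : Type*} (G : SimpleGraph V) (k : ℕ)
    (h : ∀ s : Finset V, ∃ f : s → Fin k,
      ∀ x y : s, G.Adj x y → f x ≠ f y) :
    ∃ f : V → Fin k, ∀ x y : V, G.Adj x y → f x ≠ f y := by
  classical
  have key : Nonempty (G →g (⊤ : SimpleGraph (Fin k))) := by
    apply SimpleGraph.nonempty_hom_of_forall_finite_subgraph_hom
    intro G' hfin
    haveI := hfin.fintype
    have hf := (h hfin.toFinset).choose_spec
    set f := (h hfin.toFinset).choose
    refine ⟨fun v => f ⟨v.1, by simp [Set.Finite.mem_toFinset]⟩, ?_⟩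
    intro a b hab
    exact hf _ _ (G'.adj_sub hab)
  obtain ⟨g⟩ := key
  exact ⟨g, fun x y hxy => g.map_rel hxy⟩
end
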